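/- arXiv:1905.03998 — 2 statements merged into one kernel-verified Lean document; each statement's English description precedes it below -/
import Mathlib

section
/- Let m ≥ 1, n ≥ 1, N ≥ 2 be natural numbers, q = 2mN + 2nN + 2n, η_inv(t) = (1/3)(2t³ + 18t² + 10t), and η_mat(t) = α·t + β with α = (mN+q)(2mN−1) − n − 1 + 2m + 2mn + 2qn + 2q and β = −m + mn(2mN−1). Then for every natural number qA with 1 ≤ qA ≤ mN, η_inv(qA)/η_mat(qA) ≤ 18/79, i.e., 79·η_inv(qA) ≤ 18·η_mat(qA). -/
lemma key_st (s t : ℝ) (hs2 : 2 ≤ s) (ht : 1 ≤ t) (hts : t ≤ s) :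
    79 * (2 * t ^ 3 + 18 * t ^ 2 + 10 * t) ≤
      54 * ((6*s^2 + 17*s + 20) * t + (2*s - 2)) := by
  have ht0 : (0:ℝ) < t := lt_of_lt_of_le one_pos ht
  nlinarith [mul_nonneg (mul_nonneg (sub_nonneg.2 hts) (sub_nonneg.2 ht)) ht0.le,
    mul_nonneg (sub_nonneg.2 hts) (sq_nonneg (t-2)),
    mul_nonneg (mul_nonneg (sub_nonneg.2 hts) (sub_nonneg.2 hts)) ht0.le,
    mul_nonneg (sub_nonneg.2 hts) (mul_nonneg (sub_nonneg.2 ht) ht0.le),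
    mul_nonneg ht0.le (sq_nonneg (t-2)),
    mul_nonneg (mul_nonneg ht0.le (sub_nonneg.2 ht)) (sq_nonneg (t-2)),
    mul_nonneg (sub_nonneg.2 hts) (sub_nonneg.2 ht), sq_nonneg (t-2),
    mul_nonneg (sub_nonneg.2 hts) ht0.le]

theorem stmt_14 (m n N qA : ℕ) (hm : 1 ≤ m) (hn : 1 ≤ n) (hN : 2 ≤ N)
    (hqA1 : 1 ≤ qA) (hqA2 : qA ≤ m * N) :
    79 * ((1 / 3 : ℝ) * (2 * (qA : ℝ) ^ 3 + 18 * (qA : ℝ) ^ 2 + 10 * qA)) ≤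
      18 * (((((m : ℝ) * N + ((2 * m * N + 2 * n * N + 2 * n : ℕ) : ℝ)) * (2 * m * N - 1)
          - n - 1 + 2 * m + 2 * m * n
          + 2 * ((2 * m * N + 2 * n * N + 2 * n : ℕ) : ℝ) * n
          + 2 * ((2 * m * N + 2 * n * N + 2 * n : ℕ) : ℝ)) * qA)
        + (-(m : ℝ) + m * n * (2 * m * N - 1))) := by
  have ha : (1:ℝ) ≤ m := by exact_mod_cast hm
  have hb : (1:ℝ) ≤ n := by exact_mod_cast hn
  have hc : (2:ℝ) ≤ N := by exact_mod_cast hN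
  have ht : (1:ℝ) ≤ qA := by exact_mod_cast hqA1
  have hts : (qA:ℝ) ≤ m * N := by exact_mod_cast hqA2
  push_cast
  set a := (m:ℝ) with hA; set b := (n:ℝ) with hB; set c := (N:ℝ) with hC
  set t := (qA:ℝ) with hT
  have ht0 : (0:ℝ) < t := lt_of_lt_of_le one_pos ht
  have hc0 : (0:ℝ) ≤ c := by linarith
  have hs2 : (2:ℝ) ≤ a * c := by nlinarith
  have hbc : (0:ℝ) ≤ b * c - 2 := by
    nlinarith [mul_nonneg (sub_nonneg.2 hb) hc0]
  have halpha : 6*(a*c)^2 + 17*(a*c) + 20 ≤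
      (a * c + (2 * a * c + 2 * b * c + 2 * b)) * (2 * a * c - 1) - b - 1 + 2 * a + 2 * a * b +
        2 * (2 * a * c + 2 * b * c + 2 * b) * b + 2 * (2 * a * c + 2 * b * c + 2 * b) := by
    have h1 : (0:ℝ) ≤ (b*c - 2) * (a*c) := mul_nonneg hbc (by linarith)
    have h2 : (0:ℝ) ≤ (b - 1) * (a*c) := mul_nonneg (by linarith) (by linarith)
    nlinarith [mul_nonneg (sub_nonneg.2 hb) hc0, sq_nonneg (b-1),
      mul_nonneg (mul_nonneg (sub_nonneg.2 hb) (sub_nonneg.2 hb)) hc0,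
      mul_nonneg (sub_nonneg.2 ha) (sub_nonneg.2 hb)]
  have hbeta : 2*(a*c) - 2 ≤ -a + a * b * (2 * a * c - 1) := by
    nlinarith [mul_nonneg (mul_nonneg (sub_nonneg.2 ha) (sub_nonneg.2 hb))
        (by linarith : (0:ℝ) ≤ 2*(a*c) - 1),
      mul_nonneg (sub_nonneg.2 ha) (by linarith : (0:ℝ) ≤ 2*(a*c) - 2)]
  have key := key_st (a*c) t hs2 ht hts
  have hmul := mul_le_mul_of_nonneg_right halpha ht0.le
  linarith [key, hmul, hbeta]
end

section
/- Let U*(x) be the unique minimizer of (1/2)UᵀHU + xᵀFU subject to GU − Ex ≤ w, where H is symmetric positive definite. Suppose the active set A = {i : G_i U*(x) − E_i x = w_i} has full-row-rank G_A. Then U*(x) = −H⁻¹Fᵀx + H⁻¹G_Aᵀ(G_A H⁻¹ G_Aᵀ)⁻¹(w_A + S_A x), where S = E + G H⁻¹ Fᵀ; i.e., the minimizer is an affine function of x with these coefficient matrices. -/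
/-!
Write `U₀` for the right-hand side and `λ = (G_A H⁻¹ G_Aᵀ)⁻¹ (w_A + S_A x)`. A direct computation
gives the KKT equations `G_A U₀ = w_A + E_A x = G_A U*` and `H U₀ + Fᵀ x = G_Aᵀ λ`; full row rank
of `G_A` makes `G_A H⁻¹ G_Aᵀ` positive definite, so the inverse is genuine. Moving from `U*`
towards `U₀` keeps the active constraints tight, and for small steps the inactive ones slack, so
minimality of `U*` gives `(H U* + Fᵀ x) ⬝ (U₀ - U*) ≥ 0`, while the KKT equations give
`(H U₀ + Fᵀ x) ⬝ (U₀ - U*) = λ ⬝ G_A (U₀ - U*) = 0`. Subtracting, `(U₀ - U*)ᵀ H (U₀ - U*) ≤ 0`,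
hence `U* = U₀`.
-/

open Matrix Filter Topology

section QuadraticObjective

variable {m : Type*} [Fintype m]

noncomputable def quadObjective (H : Matrix m m ℝ) (g U : m → ℝ) : ℝ :=
  (1 / 2) * (U ⬝ᵥ H *ᵥ U) + g ⬝ᵥ U

lemma quadObjective_add {H : Matrix m m ℝ} (hH : H.IsSymm) (g V d : m → ℝ) :
    quadObjective H g (V + d) =
      quadObjective H g V + (H *ᵥ V + g) ⬝ᵥ d + (1 / 2) * (d ⬝ᵥ H *ᵥ d) := by
  have hsymm : V ⬝ᵥ H *ᵥ d = d ⬝ᵥ H *ᵥ V := by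
    rw [dotProduct_mulVec, ← mulVec_transpose, hH.eq, dotProduct_comm]
  simp only [quadObjective, mulVec_add, dotProduct_add, add_dotProduct, hsymm,
    dotProduct_comm (H *ᵥ V) d]
  ring

lemma quadObjective_add_smul {H : Matrix m m ℝ} (hH : H.IsSymm) (g V d : m → ℝ) (t : ℝ) :
    quadObjective H g (V + t • d) =
      quadObjective H g V + t * ((H *ᵥ V + g) ⬝ᵥ d + t / 2 * (d ⬝ᵥ H *ᵥ d)) := by
  rw [quadObjective_add hH, mulVec_smul, dotProduct_smul, smul_dotProduct, dotProduct_smul,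
    smul_eq_mul, smul_eq_mul, smul_eq_mul]
  ring

lemma IsMinOn.dotProduct_gradient_nonneg {H : Matrix m m ℝ} (hH : H.IsSymm) {g V d : m → ℝ}
    {S : Set (m → ℝ)} (hmin : IsMinOn (quadObjective H g) S V)
    (hray : ∀ᶠ t in 𝓝[>] (0 : ℝ), V + t • d ∈ S) :
    0 ≤ (H *ᵥ V + g) ⬝ᵥ d := by
  have hlim : Tendsto (fun t : ℝ => (H *ᵥ V + g) ⬝ᵥ d + t / 2 * (d ⬝ᵥ H *ᵥ d)) (𝓝[>] 0)
      (𝓝 ((H *ᵥ V + g) ⬝ᵥ d)) := by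
    refine tendsto_nhdsWithin_of_tendsto_nhds ?_
    have hcont : Continuous fun t : ℝ => (H *ᵥ V + g) ⬝ᵥ d + t / 2 * (d ⬝ᵥ H *ᵥ d) := by
      fun_prop
    simpa using hcont.tendsto 0
  refine ge_of_tendsto hlim ?_
  filter_upwards [hray, self_mem_nhdsWithin] with t ht htpos
  have h := isMinOn_iff.1 hmin _ ht
  rw [quadObjective_add_smul hH] at h
  exact nonneg_of_mul_nonneg_right (by linarith) htpos

lemma IsMinOn.eq_of_dotProduct_gradient_eq_zero {H : Matrix m m ℝ} (hH : H.PosDef)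
    (hHs : H.IsSymm) {g V U : m → ℝ} {S : Set (m → ℝ)} (hmin : IsMinOn (quadObjective H g) S V)
    (hray : ∀ᶠ t in 𝓝[>] (0 : ℝ), V + t • (U - V) ∈ S)
    (horth : (H *ᵥ U + g) ⬝ᵥ (U - V) = 0) : V = U := by
  have hfirst := hmin.dotProduct_gradient_nonneg hHs hray
  have hgrad : (H *ᵥ V + g) ⬝ᵥ (U - V) =
      (H *ᵥ U + g) ⬝ᵥ (U - V) - (U - V) ⬝ᵥ H *ᵥ (U - V) := by
    rw [mulVec_sub, dotProduct_comm (U - V), ← sub_dotProduct]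
    congr 1
    abel
  by_contra hne
  have hpos := hH.dotProduct_mulVec_pos (sub_ne_zero.2 (Ne.symm hne))
  rw [star_trivial] at hpos
  linarith

lemma eventually_mulVec_add_smul_le {ι : Type*} [Fintype ι] {G : Matrix ι m ℝ} {b : ι → ℝ}
    {V d : m → ℝ} (hV : G *ᵥ V ≤ b) (hd : ∀ i, (G *ᵥ V) i = b i → (G *ᵥ d) i ≤ 0) :
    ∀ᶠ t in 𝓝[>] (0 : ℝ), G *ᵥ (V + t • d) ≤ b := by
  have hrow : ∀ i, ∀ᶠ t in 𝓝[>] (0 : ℝ), (G *ᵥ V) i + t * (G *ᵥ d) i ≤ b i := by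
    intro i
    rcases (hV i).eq_or_lt with hactive | hslack
    · filter_upwards [self_mem_nhdsWithin] with t (ht : 0 < t)
      nlinarith [hd i hactive]
    · have hcont : Continuous fun t : ℝ => (G *ᵥ V) i + t * (G *ᵥ d) i := by fun_prop
      have hlim := tendsto_nhdsWithin_of_tendsto_nhds (s := Set.Ioi 0) (hcont.tendsto 0)
      simp only [zero_mul, add_zero] at hlim
      exact (hlim.eventually (eventually_lt_nhds hslack)).mono fun t ht => ht.le
  filter_upwards [eventually_all.2 hrow] with t ht i
  simpa [mulVec_add, mulVec_smul] using ht i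

end QuadraticObjective

lemma Matrix.vecMul_injective_of_rank_eq_card {m n : Type*} [Fintype m] [Fintype n]
    {B : Matrix m n ℝ} (hB : B.rank = Fintype.card m) : Function.Injective B.vecMul := by
  rw [vecMul_injective_iff, linearIndependent_iff_card_eq_finrank_span, ← hB,
    rank_eq_finrank_span_row]
  rfl

section KKT

variable {m κ : Type*} [Fintype m] [DecidableEq m] [Fintype κ] [DecidableEq κ]
  {H : Matrix m m ℝ} {B : Matrix κ m ℝ}

lemma Matrix.PosDef.isUnit_det_mul_inv_mul_transpose (hH : H.PosDef)
    (hB : Function.Injective B.vecMul) : IsUnit (B * H⁻¹ * Bᵀ).det := by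
  have hpos := hH.inv.mul_mul_conjTranspose_same hB
  rw [conjTranspose_eq_transpose_of_trivial] at hpos
  exact (isUnit_iff_isUnit_det _).1 hpos.isUnit

lemma mulVec_kkt_point (hM : IsUnit (B * H⁻¹ * Bᵀ).det) (g : m → ℝ) (c : κ → ℝ) :
    B *ᵥ (-(H⁻¹ *ᵥ g) + (H⁻¹ * Bᵀ * (B * H⁻¹ * Bᵀ)⁻¹) *ᵥ c) = c - (B * H⁻¹) *ᵥ g := by
  rw [mulVec_add, mulVec_neg, mulVec_mulVec, mulVec_mulVec, ← Matrix.mul_assoc,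
    ← Matrix.mul_assoc, mul_nonsing_inv _ hM, one_mulVec]
  abel

lemma mulVec_kkt_point_add (hH : IsUnit H.det) (g : m → ℝ) (c : κ → ℝ) :
    H *ᵥ (-(H⁻¹ *ᵥ g) + (H⁻¹ * Bᵀ * (B * H⁻¹ * Bᵀ)⁻¹) *ᵥ c) + g =
      Bᵀ *ᵥ ((B * H⁻¹ * Bᵀ)⁻¹ *ᵥ c) := by
  rw [mulVec_add, mulVec_neg, mulVec_mulVec, mulVec_mulVec, ← Matrix.mul_assoc,
    ← Matrix.mul_assoc, mul_nonsing_inv _ hH, Matrix.one_mul, one_mulVec, mulVec_mulVec]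
  abel

end KKT

open Matrix in
theorem stmt_19_general (p n q : ℕ)
    (H : Matrix (Fin p) (Fin p) ℝ) (hH : H.PosDef) (hHsymm : H.IsSymm)
    (F : Matrix (Fin n) (Fin p) ℝ) (G : Matrix (Fin q) (Fin p) ℝ)
    (E : Matrix (Fin q) (Fin n) ℝ) (w : Fin q → ℝ)
    (x : Fin n → ℝ) (Ustar : Fin p → ℝ)
    (hfeas : ∀ i, (G.mulVec Ustar) i - (E.mulVec x) i ≤ w i)
    (hmin : ∀ U : Fin p → ℝ, (∀ i, (G.mulVec U) i - (E.mulVec x) i ≤ w i) →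
      (1 / 2) * (Ustar ⬝ᵥ H.mulVec Ustar) + x ⬝ᵥ F.mulVec Ustar ≤
        (1 / 2) * (U ⬝ᵥ H.mulVec U) + x ⬝ᵥ F.mulVec U)
    (A : Finset (Fin q))
    (hA : ∀ i : Fin q, i ∈ A ↔ (G.mulVec Ustar) i - (E.mulVec x) i = w i)
    (hrank : (G.submatrix (fun i : A => (i : Fin q)) id).rank = A.card) :
    Ustar =
      -((H⁻¹ * Fᵀ).mulVec x) +
        (H⁻¹ * (G.submatrix (fun i : A => (i : Fin q)) id)ᵀ *
          ((G.submatrix (fun i : A => (i : Fin q)) id) * H⁻¹ *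
            (G.submatrix (fun i : A => (i : Fin q)) id)ᵀ)⁻¹).mulVec
          (fun i : A => w (i : Fin q) +
            ((E + G * H⁻¹ * Fᵀ).submatrix (fun j : A => (j : Fin q)) id).mulVec x i) := by
  set GA := G.submatrix (fun i : A => (i : Fin q)) id
  set b := w + E *ᵥ x
  have hc : (fun i : A => w i +
        ((E + G * H⁻¹ * Fᵀ).submatrix (fun j : A => (j : Fin q)) id).mulVec x i) =
      (fun i : A => b i) + (GA * H⁻¹) *ᵥ (Fᵀ *ᵥ x) := by
    rw [mulVec_mulVec]
    funext i
    change w i + ((E + G * H⁻¹ * Fᵀ) *ᵥ x) i = w i + (E *ᵥ x) i + ((GA * H⁻¹ * Fᵀ) *ᵥ x) i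
    rw [add_mulVec, Pi.add_apply, add_assoc]
    -- the rows of `GA * H⁻¹ * Fᵀ` are the rows of `G * H⁻¹ * Fᵀ` indexed by `A`
    rfl
  rw [hc, ← mulVec_mulVec x H⁻¹ Fᵀ]
  set U₀ := -(H⁻¹ *ᵥ (Fᵀ *ᵥ x)) + _
  have hGA : IsUnit (GA * H⁻¹ * GAᵀ).det :=
    hH.isUnit_det_mul_inv_mul_transpose (vecMul_injective_of_rank_eq_card (by simpa using hrank))
  have hGAU : GA *ᵥ U₀ = GA *ᵥ Ustar := by
    rw [mulVec_kkt_point hGA, add_sub_cancel_right]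
    funext i
    change _ = (G *ᵥ Ustar) i
    linarith [(hA i).1 i.2, show b i = w i + (E *ᵥ x) i from rfl]
  refine IsMinOn.eq_of_dotProduct_gradient_eq_zero (g := Fᵀ *ᵥ x) (S := {U | G *ᵥ U ≤ b})
    hH hHsymm ?_ ?_ ?_
  · refine isMinOn_iff.2 fun U (hU : G *ᵥ U ≤ b) => ?_
    simpa only [quadObjective, mulVec_transpose, dotProduct_mulVec] using
      hmin U fun i => sub_le_iff_le_add.2 (hU i)
  · refine eventually_mulVec_add_smul_le (fun i => sub_le_iff_le_add.1 (hfeas i)) fun i hi => ?_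
    have hiA : i ∈ A := (hA i).2 (by simp only [b, Pi.add_apply] at hi; linarith)
    have hrow : (G *ᵥ U₀) i = (G *ᵥ Ustar) i := congrFun hGAU ⟨i, hiA⟩
    simp [mulVec_sub, hrow]
  · rw [mulVec_kkt_point_add ((isUnit_iff_isUnit_det H).1 hH.isUnit), mulVec_transpose,
      ← dotProduct_mulVec, mulVec_sub, hGAU, sub_self, dotProduct_zero]

open Matrix in
theorem stmt_19 (p n q : ℕ)
    (H : Matrix (Fin p) (Fin p) ℝ) (hH : H.PosDef) (hHsymm : H.IsSymm)
    (F : Matrix (Fin n) (Fin p) ℝ) (G : Matrix (Fin q) (Fin p) ℝ)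
    (E : Matrix (Fin q) (Fin n) ℝ) (w : Fin q → ℝ)
    (x : Fin n → ℝ) (Ustar : Fin p → ℝ)
    (hfeas : ∀ i, (G.mulVec Ustar) i - (E.mulVec x) i ≤ w i)
    (hmin : ∀ U : Fin p → ℝ, (∀ i, (G.mulVec U) i - (E.mulVec x) i ≤ w i) →
      (1 / 2) * (Ustar ⬝ᵥ H.mulVec Ustar) + x ⬝ᵥ F.mulVec Ustar ≤
        (1 / 2) * (U ⬝ᵥ H.mulVec U) + x ⬝ᵥ F.mulVec U)
    (huniq : ∀ U : Fin p → ℝ, (∀ i, (G.mulVec U) i - (E.mulVec x) i ≤ w i) →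
      (1 / 2) * (U ⬝ᵥ H.mulVec U) + x ⬝ᵥ F.mulVec U =
        (1 / 2) * (Ustar ⬝ᵥ H.mulVec Ustar) + x ⬝ᵥ F.mulVec Ustar → U = Ustar)
    (A : Finset (Fin q))
    (hA : ∀ i : Fin q, i ∈ A ↔ (G.mulVec Ustar) i - (E.mulVec x) i = w i)
    (hrank : (G.submatrix (fun i : A => (i : Fin q)) id).rank = A.card) :
    Ustar =
      -((H⁻¹ * Fᵀ).mulVec x) +
        (H⁻¹ * (G.submatrix (fun i : A => (i : Fin q)) id)ᵀ *
          ((G.submatrix (fun i : A => (i : Fin q)) id) * H⁻¹ *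
            (G.submatrix (fun i : A => (i : Fin q)) id)ᵀ)⁻¹).mulVec
          (fun i : A => w (i : Fin q) +
            ((E + G * H⁻¹ * Fᵀ).submatrix (fun j : A => (j : Fin q)) id).mulVec x i) :=
  stmt_19_general p n q H hH hHsymm F G E w x Ustar hfeas hmin A hA hrank
end
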